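/- arXiv:2012.13438 — 2 statements merged into one kernel-verified Lean document; each statement's English description precedes it below -/
import Mathlib

section
/- For every C > 0 and every bounded C-separated n-array (x^k_i) in a Banach space X such that, with respect to a fixed Schauder-type blocking (F_j) satisfying a lower ℓ₂ estimate with constant a, each sequence (x^k_i)_i converges coordinatewise, and for every ε > 0, there exist indices i_1 < j_1 < … < i_n < j_n such that a‖Σ_{k=1}^n (x^k_{i_k} − x^k_{j_k})‖ ≥ (Σ_{k=1}^n ‖x^k_{i_k} − x^k_{j_k}‖²)^{1/2} − ε ≥ C n^{1/2} − ε. -/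
open scoped BigOperators
open Filter

/-- Interleaved indices `i₁ < j₁ < i₂ < j₂ < …`. -/
def Interleaved {n : ℕ} (i j : Fin n → ℕ) : Prop :=
  (∀ k, i k < j k) ∧ ∀ (k : Fin n) (h : k.1 + 1 < n), j k < i ⟨k.1 + 1, h⟩

def IsBoundedArray {X : Type*} [NormedAddCommGroup X] {n : ℕ} (x : Fin n → ℕ → X) : Prop :=
  ∃ M : ℝ, ∀ k i, ‖x k i‖ ≤ M

def IsSeparatedArray {X : Type*} [NormedAddCommGroup X] {n : ℕ} (C : ℝ)
    (x : Fin n → ℕ → X) : Prop :=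
  ∀ k i j, i ≠ j → C ≤ ‖x k i - x k j‖

/-- `δ_n(X)`. -/
noncomputable def deltaN (X : Type*) [NormedAddCommGroup X] (n : ℕ) : ℝ :=
  sInf {d : ℝ | 0 < d ∧ ∀ C > (0:ℝ), ∀ x : Fin n → ℕ → X, IsBoundedArray x →
    IsSeparatedArray C x → ∃ i j : Fin n → ℕ, Interleaved i j ∧
      C * Real.sqrt n ≤ d * ‖∑ k, (x k (i k) - x k (j k))‖}

/-!
For `q : ℕ` let `W_q` be the closed span of the blocks `F l`, `l > q`. The blocks up to `q` span a
finite-dimensional space which, together with `W_q`, is dense in `X`; hence `X ⧸ W_q` is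
finite-dimensional. By compactness, every bounded sequence therefore has two arbitrarily late terms
whose difference is within `δ` of `W_q`, hence within `δ` of the span of finitely many blocks after
`q`. Choosing such pairs recursively for the `n` rows, with consecutive blocks, yields interleaved
indices whose differences are `δ`-close to a block sequence; the lower `ℓ₂` estimate applies to the
latter, and for `δ` small the error is absorbed into `ε`. The bound `C √n` is just separation.
-/

open Metric Set Bornology

section Quotient
variable {𝕜 E : Type*} [NontriviallyNormedField 𝕜] [NormedAddCommGroup E] [NormedSpace 𝕜 E]

theorem Submodule.finiteDimensional_quotient_topologicalClosure [CompleteSpace 𝕜]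
    {G Z : Submodule 𝕜 E} [FiniteDimensional 𝕜 G]
    (hdense : Dense ((G ⊔ Z : Submodule 𝕜 E) : Set E)) :
    FiniteDimensional 𝕜 (E ⧸ Z.topologicalClosure) := by
  set W := Z.topologicalClosure
  have : IsClosed (W : Set E) := Z.isClosed_topologicalClosure
  have hZ : Z.map W.mkQ = ⊥ := le_bot_iff.1 <|
    (Submodule.map_mono Z.le_topologicalClosure).trans (Submodule.mkQ_map_self W).le
  have hdense' : Dense ((G.map W.mkQ : Submodule 𝕜 (E ⧸ W)) : Set (E ⧸ W)) := by
    rw [← sup_bot_eq (G.map W.mkQ), ← hZ, ← Submodule.map_sup, Submodule.map_coe]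
    exact (Submodule.mkQ_surjective W).denseRange.dense_image W.continuous_mkQ hdense
  have htop : G.map W.mkQ = ⊤ := by
    rw [← Submodule.coe_eq_univ, ← (Submodule.closed_of_finiteDimensional _).closure_eq]
    exact hdense'.closure_eq
  exact Module.Finite.of_surjective (W.mkQ.comp G.subtype) (by
    rw [← LinearMap.range_eq_top, LinearMap.range_comp, Submodule.range_subtype, htop])

theorem Submodule.exists_mem_norm_sub_lt_of_norm_mk_lt {S : Submodule 𝕜 E} {x : E} {δ : ℝ}
    (h : ‖(Submodule.Quotient.mk x : E ⧸ S.topologicalClosure)‖ < δ) :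
    ∃ z ∈ S, ‖x - z‖ < δ := by
  have hnorm : ‖(Submodule.Quotient.mk x : E ⧸ S.topologicalClosure)‖ =
      infDist x S.topologicalClosure :=
    QuotientAddGroup.norm_mk (S := S.topologicalClosure.toAddSubgroup) x
  rw [hnorm, Submodule.topologicalClosure_coe, infDist_closure,
    infDist_lt_iff ⟨0, S.zero_mem⟩] at h
  simpa only [dist_eq_norm, SetLike.mem_coe] using h

end Quotient

theorem exists_lt_dist_lt_of_isBounded {α : Type*} [PseudoMetricSpace α] [ProperSpace α]
    {u : ℕ → α} (hu : IsBounded (range u)) (m : ℕ) {δ : ℝ} (hδ : 0 < δ) :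
    ∃ i j, m ≤ i ∧ i < j ∧ dist (u i) (u j) < δ := by
  obtain ⟨L, -, φ, hφ, hlim⟩ := tendsto_subseq_of_bounded hu (mem_range_self (f := u))
  obtain ⟨N, hN⟩ := Metric.cauchySeq_iff.1 hlim.cauchySeq δ hδ
  refine ⟨φ (max N m), φ (max N m + 1), (le_max_right N m).trans hφ.le_apply,
    hφ (Nat.lt_succ_self _), hN _ (le_max_left N m) _ ?_⟩
  exact (le_max_left N m).trans (Nat.le_succ _)

theorem exists_interleaved_of_forall_exists {R : ℕ → ℕ → ℕ → ℕ → ℕ → Prop}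
    (h : ∀ k q m, ∃ i j N, m ≤ i ∧ i < j ∧ q < N ∧ R k q N i j) :
    ∃ Q i j : ℕ → ℕ, Q 0 = 0 ∧ StrictMono Q ∧ (∀ k, i k < j k ∧ j k < i (k + 1)) ∧
      ∀ k, R k (Q k) (Q (k + 1)) (i k) (j k) := by
  choose I J N hI hIJ hN hR using h
  let s : ℕ → ℕ × ℕ := fun k => Nat.rec (0, 0) (fun k p => (N k p.1 p.2, J k p.1 p.2 + 1)) k
  refine ⟨fun k => (s k).1, fun k => I k (s k).1 (s k).2, fun k => J k (s k).1 (s k).2, rfl,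
    strictMono_nat_of_lt_succ fun k => hN _ _ _, fun k => ⟨hIJ _ _ _, hI (k + 1) _ _⟩,
    fun k => hR _ _ _⟩

theorem exists_sub_near_block {X : Type*} [NormedAddCommGroup X] [NormedSpace ℝ X]
    (F : ℕ → Submodule ℝ X) [∀ j, FiniteDimensional ℝ (F j)]
    (hdense : Dense ((⨆ j, F j : Submodule ℝ X) : Set X)) {u : ℕ → X}
    (hu : IsBounded (range u)) (q m : ℕ) {δ : ℝ} (hδ : 0 < δ) :
    ∃ i j N, m ≤ i ∧ i < j ∧ q < N ∧
      ∃ z ∈ ⨆ l ∈ Set.Ioc q N, F l, ‖u i - u j - z‖ < δ := by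
  let block : ℕ → Submodule ℝ X := fun N => ⨆ l ∈ Set.Ioc q N, F l
  have hblock : Monotone block := fun N N' hN =>
    biSup_mono fun l hl => ⟨hl.1, hl.2.trans hN⟩
  let G : Submodule ℝ X := ⨆ l : Set.Iic q, F l
  let Z : Submodule ℝ X := ⨆ N, block N
  have hGZ : (⨆ j, F j) ≤ G ⊔ Z := iSup_le fun l => by
    rcases le_or_gt l q with hl | hl
    · exact (le_iSup (fun l : Set.Iic q => F l) ⟨l, hl⟩).trans le_sup_left
    · exact ((le_biSup F (show l ∈ Set.Ioc q l from ⟨hl, le_rfl⟩)).trans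
        (le_iSup block l)).trans le_sup_right
  have : FiniteDimensional ℝ (X ⧸ Z.topologicalClosure) :=
    Submodule.finiteDimensional_quotient_topologicalClosure (hdense.mono hGZ)
  -- the instance that makes `X ⧸ Z.topologicalClosure` a normed space
  have : IsClosed (Z.topologicalClosure : Set X) := Z.isClosed_topologicalClosure
  have := FiniteDimensional.proper ℝ (X ⧸ Z.topologicalClosure)
  have hv : IsBounded (range fun i => Z.topologicalClosure.mkQ (u i)) := by
    obtain ⟨M, hM⟩ := isBounded_iff_forall_norm_le.1 hu
    refine isBounded_iff_forall_norm_le.2 ⟨M, forall_mem_range.2 fun i => ?_⟩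
    exact (Submodule.Quotient.norm_mk_le _ _).trans (hM _ (mem_range_self i))
  obtain ⟨i, j, hmi, hij, hdist⟩ := exists_lt_dist_lt_of_isBounded hv m hδ
  rw [dist_eq_norm, ← map_sub] at hdist
  obtain ⟨z, hzZ, hz⟩ := Submodule.exists_mem_norm_sub_lt_of_norm_mk_lt hdist
  obtain ⟨N, hzN⟩ := (Submodule.mem_iSup_of_directed block hblock.directed_le).1 hzZ
  exact ⟨i, j, max N (q + 1), hmi, hij, by omega, z, hblock (le_max_left _ _) hzN, hz⟩

section Estimates
variable {ι E : Type*} [Fintype ι] [SeminormedAddCommGroup E]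

theorem sqrt_sum_norm_sq_le_of_norm_sub_le {d z : ι → E} {a δ : ℝ} (ha : 0 ≤ a)
    (hδ : 0 ≤ δ) (hz : ∑ k, ‖z k‖ ^ 2 ≤ a ^ 2 * ‖∑ k, z k‖ ^ 2) (hdz : ∀ k, ‖d k - z k‖ ≤ δ) :
    √(∑ k, ‖d k‖ ^ 2) ≤
      a * ‖∑ k, d k‖ + (√(Fintype.card ι) + a * Fintype.card ι) * δ := by
  have hminkowski :
      √(∑ k, ‖d k‖ ^ 2) ≤ √(∑ k, ‖z k‖ ^ 2) + √(∑ k, ‖d k - z k‖ ^ 2) := by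
    simpa only [PiLp.norm_eq_of_L2, ← WithLp.toLp_sub, Pi.sub_apply] using
      norm_le_norm_add_norm_sub' (WithLp.toLp 2 d) (WithLp.toLp 2 z)
  have hlower : √(∑ k, ‖z k‖ ^ 2) ≤ a * ‖∑ k, z k‖ :=
    (Real.sqrt_le_sqrt (hz.trans_eq (mul_pow _ _ 2).symm)).trans_eq
      (Real.sqrt_sq (by positivity))
  have herror : √(∑ k, ‖d k - z k‖ ^ 2) ≤ √(Fintype.card ι) * δ := by
    rw [← Real.sqrt_sq hδ, ← Real.sqrt_mul (Nat.cast_nonneg _)]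
    refine Real.sqrt_le_sqrt ((Finset.sum_le_card_nsmul _ _ (δ ^ 2) fun k _ => ?_).trans_eq ?_)
    · exact pow_le_pow_left₀ (norm_nonneg _) (hdz k) 2
    · rw [nsmul_eq_mul, Finset.card_univ]
  have hsum : ‖∑ k, z k‖ ≤ ‖∑ k, d k‖ + Fintype.card ι * δ := by
    refine (norm_le_norm_add_norm_sub' _ (∑ k, d k)).trans (add_le_add le_rfl ?_)
    rw [← Finset.sum_sub_distrib]
    refine (norm_sum_le_of_le _ fun k _ =>
      (norm_sub_rev (z k) (d k)).trans_le (hdz k)).trans_eq ?_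
    rw [Finset.sum_const, nsmul_eq_mul, Finset.card_univ]
  linarith [mul_le_mul_of_nonneg_left hsum ha]

theorem mul_sqrt_card_le_sqrt_sum_sq {f : ι → ℝ} {C : ℝ} (hC : 0 ≤ C) (hf : ∀ k, C ≤ f k) :
    C * √(Fintype.card ι) ≤ √(∑ k, f k ^ 2) := by
  rw [Real.le_sqrt (by positivity) (by positivity), mul_pow, Real.sq_sqrt (Nat.cast_nonneg _),
    mul_comm, ← Finset.card_univ, ← nsmul_eq_mul]
  exact Finset.card_nsmul_le_sum _ _ _ fun k _ => pow_le_pow_left₀ hC (hf k) 2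

end Estimates

theorem stmt9_general (X : Type*) [NormedAddCommGroup X] [NormedSpace ℝ X]
    (F : ℕ → Subspace ℝ X) (hfd : ∀ j, FiniteDimensional ℝ (F j))
    (hdense : Dense ((⨆ j, F j : Subspace ℝ X) : Set X)) (a : ℝ) (ha : 0 < a)
    (hest : ∀ (m : ℕ) (q : ℕ → ℕ), q 0 = 0 → StrictMono q →
      ∀ y : Fin m → X,
        (∀ i : Fin m, y i ∈ ⨆ j ∈ Set.Ioc (q i.1) (q (i.1 + 1)), F j) →
        ∑ i, ‖y i‖ ^ 2 ≤ a ^ 2 * ‖∑ i, y i‖ ^ 2)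
    (n : ℕ) (C : ℝ) (hC : 0 < C) (x : Fin n → ℕ → X)
    (hb : IsBoundedArray x) (hs : IsSeparatedArray C x)
    (ε : ℝ) (hε : 0 < ε) :
    ∃ i j : Fin n → ℕ, Interleaved i j ∧
      (∑ k, ‖x k (i k) - x k (j k)‖ ^ 2) ^ ((1:ℝ)/2) - ε ≤
        a * ‖∑ k, (x k (i k) - x k (j k))‖ ∧
      C * Real.sqrt n - ε ≤ (∑ k, ‖x k (i k) - x k (j k)‖ ^ 2) ^ ((1:ℝ)/2) := by
  obtain ⟨M, hM⟩ := hb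
  set δ := ε / (√n + a * n + 1)
  have hδ : 0 < δ := by positivity
  have hδε : (√n + a * n) * δ ≤ ε := by
    rw [← mul_div_assoc, div_le_iff₀ (by positivity)]
    nlinarith
  let u : ℕ → ℕ → X := fun k => if h : k < n then x ⟨k, h⟩ else 0
  have hu : ∀ k, IsBounded (range (u k)) := fun k => by
    refine isBounded_iff_forall_norm_le.2 ⟨max M 0, forall_mem_range.2 fun i => ?_⟩
    by_cases hk : k < n
    · simpa only [u, dif_pos hk] using (hM _ i).trans (le_max_left _ _)
    · simpa only [u, dif_neg hk, Pi.zero_apply, norm_zero] using le_max_right M 0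
  obtain ⟨Q, i, j, hQ0, hQ, hij, hnear⟩ := exists_interleaved_of_forall_exists fun k q m =>
    exists_sub_near_block F hdense (hu k) q m hδ
  choose z hzQ hz using hnear
  have hux : ∀ k : Fin n, u k = x k := fun k => dif_pos k.2
  refine ⟨fun k => i k, fun k => j k, ⟨fun k => (hij k).1, fun k _ => (hij k).2⟩, ?_, ?_⟩
  · have hupper := sqrt_sum_norm_sq_le_of_norm_sub_le
      (d := fun k : Fin n => x k (i k) - x k (j k)) (z := fun k => z k) ha.le hδ.le
      (hest n Q hQ0 hQ _ fun k => hzQ k) fun k => by simpa only [hux] using (hz k).le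
    rw [← Real.sqrt_eq_rpow]
    simp only [Fintype.card_fin] at hupper
    linarith
  · have hseparated := mul_sqrt_card_le_sqrt_sum_sq
      (f := fun k : Fin n => ‖x k (i k) - x k (j k)‖) hC.le fun k => hs k _ _ (hij k).1.ne
    rw [← Real.sqrt_eq_rpow]
    simp only [Fintype.card_fin] at hseparated
    linarith

theorem stmt9 (X : Type*) [NormedAddCommGroup X] [NormedSpace ℝ X] [CompleteSpace X]
    (F : ℕ → Subspace ℝ X) (hfd : ∀ j, FiniteDimensional ℝ (F j))
    (hdense : Dense ((⨆ j, F j : Subspace ℝ X) : Set X)) (a : ℝ) (ha : 0 < a)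
    (hest : ∀ (m : ℕ) (q : ℕ → ℕ), q 0 = 0 → StrictMono q →
      ∀ y : Fin m → X,
        (∀ i : Fin m, y i ∈ ⨆ j ∈ Set.Ioc (q i.1) (q (i.1 + 1)), F j) →
        ∑ i, ‖y i‖ ^ 2 ≤ a ^ 2 * ‖∑ i, y i‖ ^ 2)
    (f : ℕ → StrongDual ℝ X)
    -- the coordinate functionals of the blocking: they separate points and each is
    -- supported on the corresponding block
    (hsep : ∀ x : X, (∀ m, f m x = 0) → x = 0)
    (n : ℕ) (C : ℝ) (hC : 0 < C) (x : Fin n → ℕ → X)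
    (hb : IsBoundedArray x) (hs : IsSeparatedArray C x)
    (hconv : ∀ (k : Fin n) (m : ℕ), ∃ L : ℝ,
      Filter.Tendsto (fun i => f m (x k i)) Filter.atTop (nhds L))
    (ε : ℝ) (hε : 0 < ε) :
    ∃ i j : Fin n → ℕ, Interleaved i j ∧
      (∑ k, ‖x k (i k) - x k (j k)‖ ^ 2) ^ ((1:ℝ)/2) - ε ≤
        a * ‖∑ k, (x k (i k) - x k (j k))‖ ∧
      C * Real.sqrt n - ε ≤ (∑ k, ‖x k (i k) - x k (j k)‖ ^ 2) ^ ((1:ℝ)/2) :=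
  stmt9_general X F hfd hdense a ha hest n C hC x hb hs ε hε
end

section
/- The 2-fold injective tensor product ℓ₁ ⊗̂ε ℓ₁ is not isomorphic to any closed subspace of ℓ₁. -/
noncomputable abbrev ell1 : Type := lp (fun _ : ℕ => ℝ) 1

-- Workaround: instance search no longer finds `ContinuousAdd` for spaces of continuous
-- linear maps whose domain is itself a space of continuous linear maps.
instance clmContinuousAddOfNormed {E F : Type*} [NormedAddCommGroup E] [NormedSpace ℝ E]
    [NormedAddCommGroup F] [NormedSpace ℝ F] : ContinuousAdd (E →L[ℝ] F) := by
  have h : IsTopologicalAddGroup (E →L[ℝ] F) := inferInstance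
  exact h.toContinuousAdd

/-- The canonical image of the elementary tensor `x ⊗ y` in `B(X*, Y)`;
the operator norm of sums of such operators is the injective tensor norm. -/
noncomputable def tensorElem {X Y : Type*} [NormedAddCommGroup X] [NormedSpace ℝ X]
    [NormedAddCommGroup Y] [NormedSpace ℝ Y] (x : X) (y : Y) :
    StrongDual ℝ X →L[ℝ] Y :=
  (NormedSpace.inclusionInDoubleDual ℝ X x).smulRight y

/-- `ℓ₁ ⊗̂ε ℓ₁`, realized as the closed span of the elementary tensors in `B(ℓ₁*, ℓ₁)`. -/
noncomputable def epsTensor2 : Submodule ℝ (StrongDual ℝ ell1 →L[ℝ] ell1) :=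
  (Submodule.span ℝ {T | ∃ x y : ell1, T = tensorElem x y}).topologicalClosure

/-- `ℓ₁ ⊗̂ε ℓ₁ ⊗̂ε ℓ₁`, realized as the closed span of elementary tensors in
`B(ℓ₁*, B(ℓ₁*, ℓ₁))`. -/
noncomputable def epsTensor3 :
    Submodule ℝ (StrongDual ℝ ell1 →L[ℝ] (StrongDual ℝ ell1 →L[ℝ] ell1)) :=
  (Submodule.span ℝ {T | ∃ x y z : ell1, T = tensorElem x (tensorElem y z)}).topologicalClosure

noncomputable def e1 (i : ℕ) : ell1 := lp.single 1 i (1 : ℝ)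

/-!
`ℓ₁` has Rademacher cotype 2: Khintchine's inequality with Littlewood's constant `√3` (the
first moment of a Rademacher sum is controlled by its second and fourth moments) gives, for
`v₁, …, v_N ∈ ℓ₁`, that the average of `‖∑ ±vₙ‖` is at least `(3N)^(-1/2) ∑ ‖vₙ‖`.
In `ℓ₁ ⊗̂ε ℓ₁`, on the other hand, take the `N = 2^m` normalised rows `wₙ ∈ ℓ₁` of the Walsh
matrix. Each `wₙ ⊗ wₙ` has norm 1, while every sign combination `∑ ±wₙ ⊗ wₙ` has norm at
most 1: applied to a functional `f` it is `∑ ±f(wₙ) wₙ`, and because the Walsh matrix is `√N`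
times an orthogonal matrix, both `f ↦ (f(wₙ))ₙ` (from `ℓ_∞^N` to `ℓ₂^N`) and `β ↦ ∑ βₙ wₙ`
(from `ℓ₂^N` to `ℓ₁^N`) are contractions. An isomorphism `T` onto a subspace of `ℓ₁` would
carry these tensors to vectors violating the cotype inequality as soon as
`2^m > 3 ‖T‖² ‖T⁻¹‖²`.
-/

-- Shortcuts: without them, finding the norm on `epsTensor2` exceeds the default depth of
-- pending instance problems.
noncomputable instance : NormedAddCommGroup (StrongDual ℝ ell1 →L[ℝ] ell1) :=
  ContinuousLinearMap.toNormedAddCommGroup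

noncomputable instance : NormedSpace ℝ (StrongDual ℝ ell1 →L[ℝ] ell1) :=
  ContinuousLinearMap.toNormedSpace

open Finset

lemma sum_sq_pow_three_le {κ : Type*} (t : Finset κ) (S : κ → ℝ) :
    (∑ i ∈ t, S i ^ 2) ^ 3 ≤ (∑ i ∈ t, |S i|) ^ 2 * ∑ i ∈ t, S i ^ 4 := by
  have h₁ : (∑ i ∈ t, S i ^ 2) ^ 2 ≤ (∑ i ∈ t, |S i|) * ∑ i ∈ t, |S i| ^ 3 :=
    sum_sq_le_sum_mul_sum_of_sq_le_mul t (fun _ _ => abs_nonneg _)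
      (fun _ _ => by positivity) fun i _ => le_of_eq (by rw [← sq_abs (S i)]; ring)
  have h₂ : (∑ i ∈ t, |S i| ^ 3) ^ 2 ≤ (∑ i ∈ t, S i ^ 2) * ∑ i ∈ t, S i ^ 4 :=
    sum_sq_le_sum_mul_sum_of_sq_le_mul t (fun _ _ => by positivity)
      (fun _ _ => by positivity) fun i _ =>
        le_of_eq (by rw [← even_two.pow_abs (S i), ← (by decide : Even 4).pow_abs (S i)]; ring)
  set A := ∑ i ∈ t, S i ^ 2
  rcases (sum_nonneg fun i _ => sq_nonneg (S i) : 0 ≤ A).eq_or_lt with hA | hA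
  · rw [show A = 0 from hA.symm, zero_pow three_ne_zero]; positivity
  have h₄ : A * A ^ 3 ≤ A * ((∑ i ∈ t, |S i|) ^ 2 * ∑ i ∈ t, S i ^ 4) :=
    calc A * A ^ 3 = (A ^ 2) ^ 2 := by ring
      _ ≤ ((∑ i ∈ t, |S i|) * ∑ i ∈ t, |S i| ^ 3) ^ 2 := pow_le_pow_left₀ (by positivity) h₁ 2
      _ = (∑ i ∈ t, |S i|) ^ 2 * (∑ i ∈ t, |S i| ^ 3) ^ 2 := by ring
      _ ≤ (∑ i ∈ t, |S i|) ^ 2 * (A * ∑ i ∈ t, S i ^ 4) := by gcongr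
      _ = A * ((∑ i ∈ t, |S i|) ^ 2 * ∑ i ∈ t, S i ^ 4) := by ring
  exact le_of_mul_le_mul_left h₄ hA

section Rademacher

variable {ι : Type*}

def rademacher (σ : ι → Bool) (n : ι) : ℝ := if σ n then -1 else 1

lemma rademacher_eq_one_or_eq_neg_one (σ : ι → Bool) (n : ι) :
    rademacher σ n = 1 ∨ rademacher σ n = -1 := by
  unfold rademacher; cases σ n <;> simp

lemma abs_rademacher (σ : ι → Bool) (n : ι) : |rademacher σ n| = 1 := by
  rcases rademacher_eq_one_or_eq_neg_one σ n with h | h <;> simp [h]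

variable [DecidableEq ι]

lemma rademacher_update_of_ne {n n₀ : ι} (h : n ≠ n₀) (σ : ι → Bool) (b : Bool) :
    rademacher (Function.update σ n₀ b) n = rademacher σ n := by
  simp [rademacher, Function.update_of_ne h]

variable [Fintype ι]

/-- Flipping the `n₀`-th sign negates each summand. -/
lemma sum_rademacher_mul_eq_zero {s : Finset ι} {n₀ : ι} (hn₀ : n₀ ∉ s) (a : ι → ℝ)
    (g : ℝ → ℝ) :
    ∑ σ : ι → Bool, rademacher σ n₀ * g (∑ n ∈ s, rademacher σ n * a n) = 0 := by
  set F : (ι → Bool) → ℝ := fun σ => rademacher σ n₀ * g (∑ n ∈ s, rademacher σ n * a n)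
  let flip : Equiv.Perm (ι → Bool) :=
    Function.Involutive.toPerm (fun σ => Function.update σ n₀ (!σ n₀)) fun σ => by simp
  have hflip : ∀ σ, F (flip σ) = -F σ := by
    intro σ
    show F (Function.update σ n₀ (!σ n₀)) = -F σ
    have hs : ∑ n ∈ s, rademacher (Function.update σ n₀ (!σ n₀)) n * a n =
        ∑ n ∈ s, rademacher σ n * a n :=
      sum_congr rfl fun n hn => by rw [rademacher_update_of_ne (ne_of_mem_of_not_mem hn hn₀)]
    simp only [F]
    rw [hs]
    simp only [rademacher, Function.update_self]
    cases σ n₀ <;> simp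
  have h := Equiv.sum_comp flip F
  simp only [hflip, sum_neg_distrib, neg_eq_self] at h
  exact h

lemma sum_sq_sum_rademacher (a : ι → ℝ) (s : Finset ι) :
    ∑ σ : ι → Bool, (∑ n ∈ s, rademacher σ n * a n) ^ 2
      = Fintype.card (ι → Bool) * ∑ n ∈ s, a n ^ 2 := by
  induction s using Finset.induction_on with
  | empty => simp
  | @insert n₀ s hn₀ ih =>
    have hexp : ∀ σ : ι → Bool, (∑ n ∈ insert n₀ s, rademacher σ n * a n) ^ 2
        = a n₀ ^ 2 + 2 * a n₀ * (rademacher σ n₀ * ∑ n ∈ s, rademacher σ n * a n)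
          + (∑ n ∈ s, rademacher σ n * a n) ^ 2 := fun σ => by
      rw [sum_insert hn₀]
      rcases rademacher_eq_one_or_eq_neg_one σ n₀ with h | h <;> rw [h] <;> ring
    have hodd : ∑ σ : ι → Bool, rademacher σ n₀ * ∑ n ∈ s, rademacher σ n * a n = 0 :=
      sum_rademacher_mul_eq_zero hn₀ a id
    rw [sum_congr rfl fun σ _ => hexp σ, sum_insert hn₀]
    simp only [sum_add_distrib, ← mul_sum, ih, hodd, sum_const,
      card_univ, nsmul_eq_mul]
    ring

lemma sum_pow_four_sum_rademacher_le (a : ι → ℝ) (s : Finset ι) :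
    ∑ σ : ι → Bool, (∑ n ∈ s, rademacher σ n * a n) ^ 4
      ≤ 3 * Fintype.card (ι → Bool) * (∑ n ∈ s, a n ^ 2) ^ 2 := by
  induction s using Finset.induction_on with
  | empty => simp
  | @insert n₀ s hn₀ ih =>
    have hexp : ∀ σ : ι → Bool, (∑ n ∈ insert n₀ s, rademacher σ n * a n) ^ 4
        = a n₀ ^ 4 + 4 * a n₀ ^ 3 * (rademacher σ n₀ * ∑ n ∈ s, rademacher σ n * a n)
          + 6 * a n₀ ^ 2 * (∑ n ∈ s, rademacher σ n * a n) ^ 2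
          + 4 * a n₀ * (rademacher σ n₀ * (∑ n ∈ s, rademacher σ n * a n) ^ 3)
          + (∑ n ∈ s, rademacher σ n * a n) ^ 4 := fun σ => by
      rw [sum_insert hn₀]
      rcases rademacher_eq_one_or_eq_neg_one σ n₀ with h | h <;> rw [h] <;> ring
    have hodd : ∑ σ : ι → Bool, rademacher σ n₀ * ∑ n ∈ s, rademacher σ n * a n = 0 :=
      sum_rademacher_mul_eq_zero hn₀ a id
    rw [sum_congr rfl fun σ _ => hexp σ, sum_insert hn₀]
    simp only [sum_add_distrib, ← mul_sum, sum_sq_sum_rademacher, hodd,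
      sum_rademacher_mul_eq_zero hn₀ a (· ^ 3),
      sum_const, card_univ, nsmul_eq_mul]
    have hc : (0 : ℝ) ≤ Fintype.card (ι → Bool) := Nat.cast_nonneg _
    nlinarith [mul_nonneg hc (sq_nonneg (a n₀ ^ 2))]

/-- Khintchine's inequality for `p = 1`, with Littlewood's constant `√3`. -/
lemma sq_mul_sum_sq_le_three_mul_sq_sum_abs (a : ι → ℝ) :
    (Fintype.card (ι → Bool) : ℝ) ^ 2 * ∑ n, a n ^ 2
      ≤ 3 * (∑ σ : ι → Bool, |∑ n, rademacher σ n * a n|) ^ 2 := by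
  set c : ℝ := (Fintype.card (ι → Bool) : ℝ)
  set A := ∑ n, a n ^ 2
  set Q := ∑ σ : ι → Bool, |∑ n, rademacher σ n * a n|
  have hc : 0 < c := by positivity
  rcases (sum_nonneg fun n _ => sq_nonneg (a n) : 0 ≤ A).eq_or_lt with hA | hA
  · rw [show A = 0 from hA.symm, mul_zero]; positivity
  have h := sum_sq_pow_three_le univ fun σ : ι → Bool => ∑ n, rademacher σ n * a n
  rw [sum_sq_sum_rademacher] at h
  have h₄ := sum_pow_four_sum_rademacher_le a univ
  have : (c * A ^ 2) * (c ^ 2 * A) ≤ (c * A ^ 2) * (3 * Q ^ 2) := by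
    calc (c * A ^ 2) * (c ^ 2 * A) = (c * A) ^ 3 := by ring
      _ ≤ Q ^ 2 * ∑ σ : ι → Bool, (∑ n, rademacher σ n * a n) ^ 4 := h
      _ ≤ Q ^ 2 * (3 * c * A ^ 2) := by gcongr
      _ = (c * A ^ 2) * (3 * Q ^ 2) := by ring
  exact le_of_mul_le_mul_left this (by positivity)

lemma card_mul_sum_abs_le (a : ι → ℝ) :
    (Fintype.card (ι → Bool) : ℝ) * ∑ n, |a n|
      ≤ √(3 * Fintype.card ι) * ∑ σ : ι → Bool, |∑ n, rademacher σ n * a n| := by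
  have hcs : (∑ n, |a n|) ^ 2 ≤ Fintype.card ι * ∑ n, a n ^ 2 := by
    simpa only [card_univ, sq_abs] using sq_sum_le_card_mul_sum_sq (s := univ) (f := fun n => |a n|)
  refine (pow_le_pow_iff_left₀ (by positivity) (by positivity) two_ne_zero).mp ?_
  calc ((Fintype.card (ι → Bool) : ℝ) * ∑ n, |a n|) ^ 2
      = (Fintype.card (ι → Bool) : ℝ) ^ 2 * (∑ n, |a n|) ^ 2 := by ring
    _ ≤ (Fintype.card (ι → Bool) : ℝ) ^ 2 * (Fintype.card ι * ∑ n, a n ^ 2) := by gcongr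
    _ = Fintype.card ι * ((Fintype.card (ι → Bool) : ℝ) ^ 2 * ∑ n, a n ^ 2) := by ring
    _ ≤ Fintype.card ι * (3 * (∑ σ : ι → Bool, |∑ n, rademacher σ n * a n|) ^ 2) := by
        exact mul_le_mul_of_nonneg_left (sq_mul_sum_sq_le_three_mul_sq_sum_abs a) (by positivity)
    _ = (√(3 * Fintype.card ι) * ∑ σ : ι → Bool, |∑ n, rademacher σ n * a n|) ^ 2 := by
        rw [mul_pow, Real.sq_sqrt (by positivity)]; ring

end Rademacher

section LpOne

variable {α : Type*}

lemma lp_one_norm_eq_tsum_abs (x : lp (fun _ : α => ℝ) 1) : ‖x‖ = ∑' k, |x k| := by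
  simpa using lp.norm_eq_tsum_rpow (by norm_num) x

lemma lp_one_summable_abs (x : lp (fun _ : α => ℝ) 1) : Summable fun k => |x k| := by
  simpa using (lp.memℓp x).summable (p := 1) (by norm_num)

lemma lp_one_norm_sum_smul_single [DecidableEq α] {κ : Type*} [Fintype κ] {idx : κ → α}
    (hidx : Function.Injective idx) (g : κ → ℝ) :
    ‖∑ c, g c • lp.single (E := fun _ : α => ℝ) 1 (idx c) 1‖ = ∑ c, |g c| := by
  set f : α → ℝ := Function.extend idx g 0
  have hf : ∀ c, f (idx c) = g c := hidx.extend_apply g 0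
  have h := lp.norm_sum_single (p := 1) (by norm_num) f (univ.map ⟨idx, hidx⟩)
  simp only [ENNReal.toReal_one, Real.rpow_one, Real.norm_eq_abs, sum_map,
    Function.Embedding.coeFn_mk, hf] at h
  rw [← h]
  congr 1
  exact sum_congr rfl fun c _ => by rw [← lp.single_smul, smul_eq_mul, mul_one]

end LpOne

section Cotype

variable {α ι : Type*} [Fintype ι] [DecidableEq ι]

lemma card_mul_sum_norm_le (v : ι → lp (fun _ : α => ℝ) 1) :
    (Fintype.card (ι → Bool) : ℝ) * ∑ n, ‖v n‖
      ≤ √(3 * Fintype.card ι) * ∑ σ : ι → Bool, ‖∑ n, rademacher σ n • v n‖ := by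
  have hcoord : ∀ σ k, (∑ n, rademacher σ n • v n) k = ∑ n, rademacher σ n * v n k :=
    fun σ k => by rw [lp.coeFn_sum, Finset.sum_apply]; rfl
  have hsummable : ∀ σ, Summable fun k => |∑ n, rademacher σ n * v n k| := fun σ =>
    (lp_one_summable_abs (∑ n, rademacher σ n • v n)).congr fun k => by rw [hcoord]
  simp only [lp_one_norm_eq_tsum_abs, hcoord]
  rw [← Summable.tsum_finsetSum fun n _ => lp_one_summable_abs (v n),
    ← Summable.tsum_finsetSum fun σ _ => hsummable σ, ← tsum_mul_left, ← tsum_mul_left]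
  exact Summable.tsum_le_tsum (fun k => card_mul_sum_abs_le fun n => v n k)
    ((summable_sum fun n _ => lp_one_summable_abs (v n)).mul_left _)
    ((summable_sum fun σ _ => hsummable σ).mul_left _)

lemma card_le_three_mul_sq_of_norm_sum_rademacher_le (v : ι → lp (fun _ : α => ℝ) 1) {C K : ℝ}
    (hC : ∀ σ, ‖∑ n, rademacher σ n • v n‖ ≤ C) (hK : ∀ n, 1 ≤ K * ‖v n‖) :
    (Fintype.card ι : ℝ) ≤ 3 * (K * C) ^ 2 := by
  set N : ℝ := (Fintype.card ι : ℝ)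
  set c : ℝ := (Fintype.card (ι → Bool) : ℝ)
  rcases isEmpty_or_nonempty ι with hι | ⟨⟨n₀⟩⟩
  · simp only [N, Fintype.card_eq_zero, Nat.cast_zero]; positivity
  have hK₀ : 0 ≤ K := by nlinarith [hK n₀, norm_nonneg (v n₀)]
  have hN : N ≤ K * ∑ n, ‖v n‖ := by
    calc N = ∑ _n : ι, (1 : ℝ) := by simp [N]
      _ ≤ ∑ n, K * ‖v n‖ := sum_le_sum fun n _ => hK n
      _ = K * ∑ n, ‖v n‖ := by rw [mul_sum]
  have hsum : ∑ σ : ι → Bool, ‖∑ n, rademacher σ n • v n‖ ≤ c * C := by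
    simpa [c] using sum_le_sum fun σ (_ : σ ∈ univ) => hC σ
  have hcN : c * N ≤ c * (K * √(3 * N) * C) :=
    calc c * N ≤ K * (c * ∑ n, ‖v n‖) := by nlinarith [show (0 : ℝ) < c by positivity]
      _ ≤ K * (√(3 * N) * ∑ σ : ι → Bool, ‖∑ n, rademacher σ n • v n‖) := by
          gcongr K * ?_; exact card_mul_sum_norm_le v
      _ ≤ K * (√(3 * N) * (c * C)) := by gcongr
      _ = c * (K * √(3 * N) * C) := by ring
  have hN' := le_of_mul_le_mul_left hcN (by positivity)
  have hNpos : 0 < N := Nat.cast_pos.mpr (Fintype.card_pos_iff.mpr ⟨n₀⟩)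
  have hsq := pow_le_pow_left₀ hNpos.le hN' 2
  rw [mul_pow, mul_pow, Real.sq_sqrt (by positivity)] at hsq
  exact le_of_mul_le_mul_left (by nlinarith [hsq]) hNpos

end Cotype

section Walsh

variable {κ : Type*} [Fintype κ]

def walsh (b c : κ → Bool) : ℝ := ∏ i, if b i && c i then -1 else 1

lemma walsh_comm (b c : κ → Bool) : walsh b c = walsh c b := by
  simp only [walsh, Bool.and_comm]

lemma walsh_mul_walsh (b b' c : κ → Bool) :
    walsh b c * walsh b' c = walsh (fun i => xor (b i) (b' i)) c := by
  rw [walsh, walsh, walsh, ← prod_mul_distrib]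
  refine prod_congr rfl fun i _ => ?_
  cases b i <;> cases b' i <;> cases c i <;> norm_num

lemma abs_walsh (b c : κ → Bool) : |walsh b c| = 1 := by
  simp only [walsh, abs_prod]
  exact prod_eq_one fun i _ => by split_ifs <;> simp

variable [DecidableEq κ]

lemma sum_walsh (d : κ → Bool) :
    ∑ c, walsh d c = if d = fun _ => false then (Fintype.card (κ → Bool) : ℝ) else 0 := by
  simp only [walsh]
  rw [← Fintype.prod_sum (fun i (x : Bool) => if d i && x then (-1 : ℝ) else 1)]
  split_ifs with hd
  · simp [hd]
  · obtain ⟨i, hi⟩ : ∃ i, d i = true := by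
      by_contra! h
      exact hd (funext fun i => by simpa using h i)
    exact prod_eq_zero (mem_univ i) (by simp [hi])

lemma sum_walsh_mul_walsh (b b' : κ → Bool) :
    ∑ c, walsh b c * walsh b' c = if b = b' then (Fintype.card (κ → Bool) : ℝ) else 0 := by
  simp only [walsh_mul_walsh, sum_walsh]
  congr 1
  simp only [funext_iff, bne_eq_false_iff_eq]

lemma sum_sq_sum_mul_walsh (d : (κ → Bool) → ℝ) :
    ∑ c, (∑ n, d n * walsh n c) ^ 2 = Fintype.card (κ → Bool) * ∑ n, d n ^ 2 := by
  calc ∑ c, (∑ n, d n * walsh n c) ^ 2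
      = ∑ n, ∑ n', d n * d n' * ∑ c, walsh n c * walsh n' c := by
        simp_rw [sq, sum_mul_sum, mul_sum]
        rw [sum_comm]
        exact sum_congr rfl fun n _ => sum_comm.trans (sum_congr rfl fun n' _ =>
          sum_congr rfl fun c _ => by ring)
    _ = Fintype.card (κ → Bool) * ∑ n, d n ^ 2 := by
        simp [sum_walsh_mul_walsh, mul_sum, sq, mul_comm]

end Walsh

section WalshVectors

variable {κ : Type*} [Fintype κ] [DecidableEq κ]

lemma norm_e1 (i : ℕ) : ‖e1 i‖ = 1 := by
  rw [e1, lp.norm_single (by norm_num), norm_one]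

noncomputable def walshVec (b : κ → Bool) : ell1 :=
  (Fintype.card (κ → Bool) : ℝ)⁻¹ • ∑ c, walsh b c • e1 (Fintype.equivFin (κ → Bool) c)

lemma sum_smul_walshVec (β : (κ → Bool) → ℝ) :
    ∑ n, β n • walshVec n = ∑ c, ((Fintype.card (κ → Bool) : ℝ)⁻¹ * ∑ n, β n * walsh n c) •
      e1 (Fintype.equivFin (κ → Bool) c) := by
  simp only [walshVec, smul_sum, smul_smul, sum_smul, mul_sum]
  rw [sum_comm]
  exact sum_congr rfl fun c _ => sum_congr rfl fun n _ => by congr 1; ring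

lemma norm_sum_smul_e1 (g : (κ → Bool) → ℝ) :
    ‖∑ c, g c • e1 (Fintype.equivFin (κ → Bool) c)‖ = ∑ c, |g c| :=
  lp_one_norm_sum_smul_single (fun _ _ h => (Fintype.equivFin _).injective (Fin.val_injective h)) g

lemma norm_walshVec (b : κ → Bool) : ‖walshVec b‖ = 1 := by
  rw [walshVec, norm_smul, norm_sum_smul_e1]
  simp [abs_walsh]

lemma norm_sum_smul_walshVec_le (β : (κ → Bool) → ℝ) :
    ‖∑ n, β n • walshVec n‖ ≤ √(∑ n, β n ^ 2) := by
  set N : ℝ := (Fintype.card (κ → Bool) : ℝ)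
  have hN : 0 < N := by positivity
  set T : (κ → Bool) → ℝ := fun c => ∑ n, β n * walsh n c
  have hT : (∑ c, |T c|) ^ 2 ≤ N ^ 2 * ∑ n, β n ^ 2 := by
    calc (∑ c, |T c|) ^ 2 ≤ N * ∑ c, |T c| ^ 2 := by
          simpa only [card_univ] using sq_sum_le_card_mul_sum_sq (s := univ) (f := fun c => |T c|)
      _ = N ^ 2 * ∑ n, β n ^ 2 := by simp only [sq_abs, T, sum_sq_sum_mul_walsh]; ring
  rw [sum_smul_walshVec, norm_sum_smul_e1]
  refine (le_abs_self _).trans (Real.abs_le_sqrt ?_)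
  simp only [abs_mul, abs_inv, Nat.abs_cast, ← mul_sum]
  calc (N⁻¹ * ∑ c, |T c|) ^ 2 = N⁻¹ ^ 2 * (∑ c, |T c|) ^ 2 := by ring
    _ ≤ N⁻¹ ^ 2 * (N ^ 2 * ∑ n, β n ^ 2) := by gcongr
    _ = ∑ n, β n ^ 2 := by field_simp

lemma sum_sq_apply_walshVec_le (f : StrongDual ℝ ell1) :
    ∑ n : κ → Bool, f (walshVec n) ^ 2 ≤ ‖f‖ ^ 2 := by
  set N : ℝ := (Fintype.card (κ → Bool) : ℝ) with hN_def
  have hN : 0 < N := by positivity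
  set x : (κ → Bool) → ℝ := fun c => f (e1 (Fintype.equivFin (κ → Bool) c))
  have hx : ∀ c, x c ^ 2 ≤ ‖f‖ ^ 2 := fun c => by
    rw [← sq_abs]
    gcongr
    calc |x c| ≤ ‖f‖ * ‖e1 (Fintype.equivFin (κ → Bool) c)‖ := f.le_opNorm _
      _ = ‖f‖ := by rw [norm_e1, mul_one]
  have hfw : ∀ n, f (walshVec n) = N⁻¹ * ∑ c, x c * walsh c n := fun n => by
    simp only [walshVec, map_smul, map_sum, smul_eq_mul, walsh_comm n, x, mul_comm, hN_def]
  calc ∑ n, f (walshVec n) ^ 2 = N⁻¹ ^ 2 * ∑ n, (∑ c, x c * walsh c n) ^ 2 := by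
        rw [mul_sum]; exact sum_congr rfl fun n _ => by rw [hfw, mul_pow]
    _ = N⁻¹ * ∑ c, x c ^ 2 := by rw [sum_sq_sum_mul_walsh, ← hN_def]; field_simp
    _ ≤ N⁻¹ * ∑ _c : κ → Bool, ‖f‖ ^ 2 := by gcongr N⁻¹ * ?_; exact sum_le_sum fun c _ => hx c
    _ = ‖f‖ ^ 2 := by simp [N]

end WalshVectors

section ElementaryTensor

variable {X Y : Type*} [NormedAddCommGroup X] [NormedSpace ℝ X] [NormedAddCommGroup Y]
  [NormedSpace ℝ Y]

lemma tensorElem_apply (x : X) (y : Y) (f : StrongDual ℝ X) : tensorElem x y f = f x • y := rfl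

lemma norm_tensorElem (x : X) (y : Y) : ‖tensorElem x y‖ = ‖x‖ * ‖y‖ := by
  rw [tensorElem, ContinuousLinearMap.norm_smulRight_apply]
  congr 1
  exact (NormedSpace.inclusionInDoubleDualLi ℝ).norm_map x

end ElementaryTensor

section WalshTensors

variable {κ : Type*} [Fintype κ] [DecidableEq κ]

noncomputable def walshTensor (n : κ → Bool) : epsTensor2 :=
  ⟨tensorElem (walshVec n) (walshVec n),
    Submodule.le_topologicalClosure _ (Submodule.subset_span ⟨_, _, rfl⟩)⟩

lemma norm_walshTensor (n : κ → Bool) : ‖walshTensor n‖ = 1 := by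
  rw [Submodule.coe_norm, walshTensor, norm_tensorElem, norm_walshVec, mul_one]

lemma norm_sum_smul_walshTensor_le (a : (κ → Bool) → ℝ) (ha : ∀ n, |a n| ≤ 1) :
    ‖∑ n, a n • walshTensor n‖ ≤ 1 := by
  rw [Submodule.coe_norm]
  refine ContinuousLinearMap.opNorm_le_bound _ zero_le_one fun f => ?_
  have happly : ((∑ n, a n • walshTensor n : epsTensor2) : StrongDual ℝ ell1 →L[ℝ] ell1) f =
      ∑ n, (a n * f (walshVec n)) • walshVec n := by
    simp [walshTensor, tensorElem_apply, smul_smul]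
  rw [happly, one_mul]
  calc ‖∑ n, (a n * f (walshVec n)) • walshVec n‖
      ≤ √(∑ n, (a n * f (walshVec n)) ^ 2) := norm_sum_smul_walshVec_le _
    _ ≤ √(∑ n, f (walshVec n) ^ 2) := Real.sqrt_le_sqrt <| sum_le_sum fun n _ => by
        rw [mul_pow]
        exact mul_le_of_le_one_left (sq_nonneg _) ((sq_le_one_iff_abs_le_one _).mpr (ha n))
    _ ≤ √(‖f‖ ^ 2) := Real.sqrt_le_sqrt (sum_sq_apply_walshVec_le f)
    _ = ‖f‖ := Real.sqrt_sq (norm_nonneg f)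

end WalshTensors

theorem stmt13 :
    ¬ ∃ Z : Subspace ℝ ell1, IsClosed (Z : Set ell1) ∧
      Nonempty (epsTensor2 ≃L[ℝ] Z) := by
  rintro ⟨Z, -, ⟨Φ⟩⟩
  set T : epsTensor2 →L[ℝ] ell1 := Z.subtypeL ∘L (Φ : epsTensor2 →L[ℝ] Z)
  set K := ‖(Φ.symm : Z →L[ℝ] epsTensor2)‖
  obtain ⟨m, hm⟩ := pow_unbounded_of_one_lt (3 * (K * ‖T‖) ^ 2) one_lt_two
  have hsigns (σ : (Fin m → Bool) → Bool) : ‖∑ n, rademacher σ n • T (walshTensor n)‖ ≤ ‖T‖ :=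
    calc ‖∑ n, rademacher σ n • T (walshTensor n)‖
        = ‖T (∑ n, rademacher σ n • walshTensor n)‖ := by simp only [map_sum, map_smul]
      _ ≤ ‖T‖ * 1 := T.le_opNorm_of_le <|
          norm_sum_smul_walshTensor_le _ fun n => (abs_rademacher σ n).le
      _ = ‖T‖ := mul_one _
  have hbelow (n : Fin m → Bool) : 1 ≤ K * ‖T (walshTensor n)‖ :=
    calc 1 = ‖(Φ.symm : Z →L[ℝ] epsTensor2) (Φ (walshTensor n))‖ := by
          rw [ContinuousLinearEquiv.coe_coe, Φ.symm_apply_apply, norm_walshTensor]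
      _ ≤ K * ‖T (walshTensor n)‖ := (Φ.symm : Z →L[ℝ] epsTensor2).le_opNorm _
  have hcard := card_le_three_mul_sq_of_norm_sum_rademacher_le _ hsigns hbelow
  simp only [Fintype.card_fun, Fintype.card_bool, Fintype.card_fin, Nat.cast_pow,
    Nat.cast_ofNat] at hcard
  linarith
end
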